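/- Let α be a nonempty finite type and let pD, qD, pO, qO, rS, rT be probability mass functions on α that are strictly positive everywhere. Let β > 0, ε > 0, and L ≥ 0 be real numbers. Assume: (i) the likelihood-ratio identities pD(a)/rS(a) = qD(a)/rT(a) and pO(a)/rS(a) = qO(a)/rT(a) hold for every a ∈ α; (ii) |log(pD(a)/rS(a))| ≤ L and |log(pO(a)/rS(a))| ≤ L for every a ∈ α; (iii) KL(pD‖qD) ≤ ε/β and KL(pO‖qO) ≤ ε/β; and (iv) KL(pD‖rS) ≤ KL(pO‖rS). Then KL(qD‖rT) ≤ KL(qO‖rT) + 2·√(2ε/β)·L. (This is Theorem 1 of the paper: pD and qD are the joint distributions of goal and trajectory induced by the DARS-optimal policy under the source and target dynamics respectively, pO and qO those induced by the target-optimal policy, rS and rT the desired joint distributions in source and target; hypothesis (iv) is source-optimality of the DARS policy, hypothesis (iii) for pO, qO is Assumption 2, and the ratio identities encode that the transition-dynamics factors cancel in the likelihood ratios. The conclusion says the DARS policy is near-optimal in the target environment.) -/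

import Mathlib

/-!
Under the ratio identities, `KL(q‖r') - KL(p‖r) = ∑ (q - p) log (p / r)`, so switching from the
source to the target environment moves each policy's divergence by at most `‖q - p‖₁ · L`, and
Pinsker's inequality bounds `‖q - p‖₁` by `√(2 KL(p‖q)) ≤ √(2ε/β)`. The source ordering
`KL(pD‖rS) ≤ KL(pO‖rS)` therefore survives in the target up to twice that error.

Pinsker's inequality itself follows from the pointwise bound `3 (t - 1)² ≤ (2t + 4) klFun t`
and Cauchy–Schwarz with weights `2p + 4q`, whose total mass is `6`.
-/

open Finset

/-- Kullback–Leibler divergence between two mass functions on a finite type,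
with the convention that terms with `p a = 0` contribute `0`
(automatic here since `0 * log (0 / q a) = 0`). -/
noncomputable def KL {α : Type*} [Fintype α] (p q : α → ℝ) : ℝ :=
  ∑ a, p a * Real.log (p a / q a)

open Real Set InformationTheory

lemma isMinOn_Ici_of_hasDerivAt_sign {f f' : ℝ → ℝ} {a c : ℝ} (hac : a < c)
    (hf : ContinuousOn f (Ici a)) (hf' : ∀ x ∈ Ioi a, HasDerivAt f (f' x) x)
    (hneg : ∀ x ∈ Ioo a c, f' x ≤ 0) (hpos : ∀ x ∈ Ioi c, 0 ≤ f' x) :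
    IsMinOn f (Ici a) c := by
  refine isMinOn_iff.2 fun x (hx : a ≤ x) => ?_
  rcases le_total x c with hxc | hcx
  · refine antitoneOn_of_hasDerivWithinAt_nonpos (f' := f') (convex_Icc a c)
      (hf.mono Icc_subset_Ici_self) (fun y hy => ?_) (fun y hy => ?_) ⟨hx, hxc⟩ ⟨hac.le, le_rfl⟩ hxc
    · rw [interior_Icc] at hy ⊢
      exact (hf' y hy.1).hasDerivWithinAt
    · rw [interior_Icc] at hy
      exact hneg y hy
  · refine monotoneOn_of_hasDerivWithinAt_nonneg (f' := f') (convex_Ici c)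
      (hf.mono (Ici_subset_Ici.2 hac.le)) (fun y hy => ?_) (fun y hy => ?_) (mem_Ici.2 le_rfl)
      hcx hcx
    · rw [interior_Ici] at hy ⊢
      exact (hf' y (hac.trans hy)).hasDerivWithinAt
    · rw [interior_Ici] at hy
      exact hpos y hy

lemma monotoneOn_add_one_mul_log_sub :
    MonotoneOn (fun t => (t + 1) * log t - 2 * (t - 1)) (Ioi 0) := by
  have hderiv : ∀ x ∈ Ioi (0 : ℝ),
      HasDerivAt (fun t => (t + 1) * log t - 2 * (t - 1)) (log x + x⁻¹ - 1) x := by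
    intro x (hx : 0 < x)
    refine ((((hasDerivAt_id x).add_const 1).mul (hasDerivAt_log hx.ne')).sub
      (((hasDerivAt_id x).sub_const 1).const_mul 2)).congr_deriv ?_
    simp only [id]
    field_simp
    ring
  refine monotoneOn_of_hasDerivWithinAt_nonneg (f' := fun x => log x + x⁻¹ - 1) (convex_Ioi 0)
    (fun x hx => (hderiv x hx).continuousAt.continuousWithinAt) (fun x hx => ?_) (fun x hx => ?_)
  · rw [interior_Ioi] at hx ⊢
    exact (hderiv x hx).hasDerivWithinAt
  · rw [interior_Ioi] at hx
    linarith [one_sub_inv_le_log_of_pos hx]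

lemma three_mul_sq_sub_one_le_mul_klFun {t : ℝ} (ht : 0 ≤ t) :
    3 * (t - 1) ^ 2 ≤ (2 * t + 4) * klFun t := by
  set h : ℝ → ℝ := fun t => (t + 1) * log t - 2 * (t - 1)
  have h_one : h 1 = 0 := by simp [h]
  have hderiv : ∀ x ∈ Ioi (0 : ℝ),
      HasDerivAt (fun t => (2 * t + 4) * klFun t - 3 * (t - 1) ^ 2) (4 * h x) x := by
    intro x (hx : 0 < x)
    refine ((((hasDerivAt_id x).const_mul 2).add_const 4).mul (hasDerivAt_klFun hx.ne')).sub
      ((((hasDerivAt_id x).sub_const 1).pow 2).const_mul 3) |>.congr_deriv ?_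
    simp only [h, klFun_apply, id]
    push_cast
    ring
  have hmin : IsMinOn (fun t => (2 * t + 4) * klFun t - 3 * (t - 1) ^ 2) (Ici 0) 1 := by
    refine isMinOn_Ici_of_hasDerivAt_sign one_pos (by fun_prop) hderiv (fun x hx => ?_)
      (fun x hx => ?_)
    · have := monotoneOn_add_one_mul_log_sub hx.1 (mem_Ioi.2 one_pos) hx.2.le
      linarith
    · have := monotoneOn_add_one_mul_log_sub (mem_Ioi.2 one_pos) (mem_Ioi.2 (one_pos.trans hx))
        hx.le
      linarith
  simpa [klFun_one, sub_nonneg] using isMinOn_iff.1 hmin t ht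

lemma three_mul_sq_sub_le_mul_klFun_div {x y : ℝ} (hx : 0 ≤ x) (hy : 0 < y) :
    3 * (x - y) ^ 2 ≤ (2 * x + 4 * y) * (y * klFun (x / y)) := by
  have key := mul_le_mul_of_nonneg_left
    (three_mul_sq_sub_one_le_mul_klFun (div_nonneg hx hy.le)) (sq_nonneg y)
  have hxy : x = x / y * y := (div_mul_cancel₀ x hy.ne').symm
  calc 3 * (x - y) ^ 2 = y ^ 2 * (3 * (x / y - 1) ^ 2) := by
        rw [hxy]; field_simp
    _ ≤ _ := key
    _ = (2 * x + 4 * y) * (y * klFun (x / y)) := by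
        rw [hxy]; field_simp

section Divergence

variable {α : Type*} [Fintype α]

lemma sum_mul_klFun_div_eq_KL {p q : α → ℝ} (hq : ∀ a, q a ≠ 0) :
    ∑ a, q a * klFun (p a / q a) = KL p q + ∑ a, q a - ∑ a, p a := by
  rw [KL, ← sum_add_distrib, ← sum_sub_distrib]
  refine sum_congr rfl fun a _ => ?_
  rw [klFun_apply]
  linear_combination (log (p a / q a) - 1) * mul_div_cancel₀ (p a) (hq a)

/-- **Pinsker's inequality**, with total variation distance `(∑ a, |p a - q a|) / 2`. -/
theorem sq_sum_abs_sub_le_two_mul_KL {p q : α → ℝ} (hp : ∀ a, 0 ≤ p a) (hq : ∀ a, 0 < q a)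
    (hp_sum : ∑ a, p a = 1) (hq_sum : ∑ a, q a = 1) :
    (∑ a, |p a - q a|) ^ 2 ≤ 2 * KL p q := by
  have hw : ∀ a, 0 < 2 * p a + 4 * q a := fun a => by linarith [hp a, hq a]
  have hw_sum : ∑ a, (2 * p a + 4 * q a) = 6 := by
    rw [sum_add_distrib, ← mul_sum, ← mul_sum, hp_sum, hq_sum]
    norm_num
  have hterm : ∀ a, |p a - q a| ^ 2 / (2 * p a + 4 * q a) ≤ q a * klFun (p a / q a) / 3 := by
    intro a
    rw [div_le_div_iff₀ (hw a) three_pos, sq_abs]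
    linarith [three_mul_sq_sub_le_mul_klFun_div (hp a) (hq a)]
  calc (∑ a, |p a - q a|) ^ 2 = (∑ a, |p a - q a|) ^ 2 / (∑ a, (2 * p a + 4 * q a)) * 6 := by
        rw [hw_sum]; ring
    _ ≤ (∑ a, |p a - q a| ^ 2 / (2 * p a + 4 * q a)) * 6 := by
        gcongr
        exact sq_sum_div_le_sum_sq_div _ _ fun a _ => hw a
    _ ≤ (∑ a, q a * klFun (p a / q a) / 3) * 6 :=
        mul_le_mul_of_nonneg_right (sum_le_sum fun a _ => hterm a) (by norm_num)
    _ = 2 * KL p q := by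
        rw [← sum_div, sum_mul_klFun_div_eq_KL fun a => (hq a).ne', hp_sum, hq_sum]
        ring

lemma abs_KL_sub_KL_le_of_div_eq {p q r r' : α → ℝ} {L : ℝ}
    (hratio : ∀ a, p a / r a = q a / r' a) (hlog : ∀ a, |log (p a / r a)| ≤ L) :
    |KL q r' - KL p r| ≤ (∑ a, |q a - p a|) * L := by
  have hdiff : KL q r' - KL p r = ∑ a, (q a - p a) * log (p a / r a) := by
    simp only [KL, ← hratio, ← sum_sub_distrib, sub_mul]
  calc |KL q r' - KL p r| ≤ ∑ a, |q a - p a| * |log (p a / r a)| := by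
        rw [hdiff]
        exact (abs_sum_le_sum_abs _ _).trans_eq (by simp only [abs_mul])
    _ ≤ (∑ a, |q a - p a|) * L := by
        rw [sum_mul]
        gcongr with a
        exact hlog a

lemma abs_KL_sub_KL_le_sqrt_mul_of_div_eq {p q r r' : α → ℝ} {L : ℝ}
    (hp : ∀ a, 0 ≤ p a) (hq : ∀ a, 0 < q a) (hp_sum : ∑ a, p a = 1) (hq_sum : ∑ a, q a = 1)
    (hL : 0 ≤ L) (hratio : ∀ a, p a / r a = q a / r' a) (hlog : ∀ a, |log (p a / r a)| ≤ L) :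
    |KL q r' - KL p r| ≤ √(2 * KL p q) * L := by
  have htv : ∑ a, |q a - p a| ≤ √(2 * KL p q) := by
    simp only [abs_sub_comm (q _)]
    exact (le_abs_self _).trans
      (Real.abs_le_sqrt (sq_sum_abs_sub_le_two_mul_KL hp hq hp_sum hq_sum))
  exact (abs_KL_sub_KL_le_of_div_eq hratio hlog).trans (by gcongr)

end Divergence

theorem theorem1_dars_near_optimality_general
    {α : Type*} [Fintype α]
    (pD qD pO qO rS rT : α → ℝ)
    (hpD_pos : ∀ a, 0 < pD a) (hpD_sum : ∑ a, pD a = 1)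
    (hqD_pos : ∀ a, 0 < qD a) (hqD_sum : ∑ a, qD a = 1)
    (hpO_pos : ∀ a, 0 < pO a) (hpO_sum : ∑ a, pO a = 1)
    (hqO_pos : ∀ a, 0 < qO a) (hqO_sum : ∑ a, qO a = 1)
    (β ε L : ℝ) (hL : 0 ≤ L)
    (hratioD : ∀ a, pD a / rS a = qD a / rT a)
    (hratioO : ∀ a, pO a / rS a = qO a / rT a)
    (hlogD : ∀ a, |Real.log (pD a / rS a)| ≤ L)
    (hlogO : ∀ a, |Real.log (pO a / rS a)| ≤ L)
    (hKLD : KL pD qD ≤ ε / β)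
    (hKLO : KL pO qO ≤ ε / β)
    (hsource_opt : KL pD rS ≤ KL pO rS) :
    KL qD rT ≤ KL qO rT + 2 * Real.sqrt (2 * ε / β) * L := by
  have hsqrt : ∀ {p q : α → ℝ}, KL p q ≤ ε / β → √(2 * KL p q) * L ≤ √(2 * ε / β) * L :=
    fun h => by gcongr; linarith [mul_div_assoc 2 ε β]
  have hD := abs_le.1 <| abs_KL_sub_KL_le_sqrt_mul_of_div_eq (fun a => (hpD_pos a).le) hqD_pos
    hpD_sum hqD_sum hL hratioD hlogD
  have hO := abs_le.1 <| abs_KL_sub_KL_le_sqrt_mul_of_div_eq (fun a => (hpO_pos a).le) hqO_pos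
    hpO_sum hqO_sum hL hratioO hlogO
  linarith [hsqrt hKLD, hsqrt hKLO]

/-- Theorem 1 of the paper: the DARS-optimal policy (inducing `pD` in source and
`qD` in target) is near-optimal in the target environment compared with the
target-optimal policy (inducing `pO` in source and `qO` in target), relative to
the desired joint distributions `rS` (source) and `rT` (target). -/
theorem theorem1_dars_near_optimality
    {α : Type*} [Fintype α] [Nonempty α]
    (pD qD pO qO rS rT : α → ℝ)
    (hpD_pos : ∀ a, 0 < pD a) (hpD_sum : ∑ a, pD a = 1)
    (hqD_pos : ∀ a, 0 < qD a) (hqD_sum : ∑ a, qD a = 1)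
    (hpO_pos : ∀ a, 0 < pO a) (hpO_sum : ∑ a, pO a = 1)
    (hqO_pos : ∀ a, 0 < qO a) (hqO_sum : ∑ a, qO a = 1)
    (hrS_pos : ∀ a, 0 < rS a) (hrS_sum : ∑ a, rS a = 1)
    (hrT_pos : ∀ a, 0 < rT a) (hrT_sum : ∑ a, rT a = 1)
    (β ε L : ℝ) (hβ : 0 < β) (hε : 0 < ε) (hL : 0 ≤ L)
    (hratioD : ∀ a, pD a / rS a = qD a / rT a)
    (hratioO : ∀ a, pO a / rS a = qO a / rT a)
    (hlogD : ∀ a, |Real.log (pD a / rS a)| ≤ L)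
    (hlogO : ∀ a, |Real.log (pO a / rS a)| ≤ L)
    (hKLD : KL pD qD ≤ ε / β)
    (hKLO : KL pO qO ≤ ε / β)
    (hsource_opt : KL pD rS ≤ KL pO rS) :
    KL qD rT ≤ KL qO rT + 2 * Real.sqrt (2 * ε / β) * L :=
  theorem1_dars_near_optimality_general pD qD pO qO rS rT hpD_pos hpD_sum hqD_pos hqD_sum hpO_pos
    hpO_sum hqO_pos hqO_sum β ε L hL hratioD hratioO hlogD hlogO hKLD hKLO hsource_opt
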